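/- There exists a 2-Lipschitz function g: ℝ → ℝ with g(0) = 0 such that, setting γ(t) = (t, g(t), z(t)) to be the horizontal lift in ℍ of the graph of g, the integral ∫₀^∞ K₄(γ(s)⁻¹·γ(t)) dt = +∞ for every s > 0, where K₄(x,y,z) = z²/‖(x,y,z)‖⁵. In particular, the singular integral operator with kernel K₄ on the 1-Ahlfors regular curve γ is not bounded on L¹. -/

import Mathlib

/-!
Take `g t = t sin (log t)` for `t > 0`. Since `t g' - g = t cos (log t)`, the horizontal lift
has the explicit height `z t = t² (2 cos (log t) + sin (log t)) / 10`. When `log t` lies in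
`[2πn, 2πn + π/2]` and `t ≫ s`, the height of `γ(s)⁻¹ γ(t)` is at least `t² / 20` while its
planar part is `O(t)`, so `K₄(γ(s)⁻¹ γ(t)) ≳ 1 / t`. Each of these infinitely many intervals
`[e^{2πn}, e^{2πn + π/2}]` carries a fixed positive amount of `dt / t`, so the integral diverges.
-/

noncomputable def Knorm (p : ℝ × ℝ × ℝ) : ℝ :=
  ((p.1 ^ 2 + p.2.1 ^ 2) ^ 2 + p.2.2 ^ 2) ^ ((1 : ℝ) / 4)

noncomputable def Hmul (p q : ℝ × ℝ × ℝ) : ℝ × ℝ × ℝ :=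
  (p.1 + q.1, p.2.1 + q.2.1, p.2.2 + q.2.2 + (p.1 * q.2.1 - p.2.1 * q.1) / 2)

def Hinv (p : ℝ × ℝ × ℝ) : ℝ × ℝ × ℝ := (-p.1, -p.2.1, -p.2.2)

noncomputable def Hdist (p q : ℝ × ℝ × ℝ) : ℝ := Knorm (Hmul (Hinv q) p)

noncomputable def Hdil (r : ℝ) (p : ℝ × ℝ × ℝ) : ℝ × ℝ × ℝ := (r * p.1, r * p.2.1, r ^ 2 * p.2.2)

open MeasureTheory

noncomputable def K4 (p : ℝ × ℝ × ℝ) : ℝ := p.2.2 ^ 2 / Knorm p ^ 5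

open Real Set Filter Topology
open scoped NNReal ENNReal

theorem LipschitzOnWith.lipschitzWith_of_Iic_Ici {f : ℝ → ℝ} {K : ℝ≥0} {a : ℝ}
    (hle : LipschitzOnWith K f (Iic a)) (hge : LipschitzOnWith K f (Ici a)) :
    LipschitzWith K f := by
  have key : ∀ x y, x ≤ y → dist (f x) (f y) ≤ K * dist x y := by
    intro x y hxy
    rcases le_total y a with hya | hay
    · exact hle.dist_le_mul x (hxy.trans hya) y hya
    rcases le_total a x with hax | hxa
    · exact hge.dist_le_mul x hax y (hax.trans hxy)
    calc dist (f x) (f y) ≤ dist (f x) (f a) + dist (f a) (f y) := dist_triangle _ _ _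
      _ ≤ K * dist x a + K * dist a y :=
          add_le_add (hle.dist_le_mul x hxa a self_mem_Iic) (hge.dist_le_mul a self_mem_Ici y hay)
      _ = K * dist x y := by
          rw [Real.dist_eq, Real.dist_eq, Real.dist_eq, abs_of_nonpos (by linarith),
            abs_of_nonpos (by linarith), abs_of_nonpos (by linarith)]
          ring
  refine LipschitzWith.of_dist_le_mul fun x y => ?_
  rcases le_total x y with hxy | hyx
  · exact key x y hxy
  · rw [dist_comm, dist_comm x]
    exact key y x hyx

lemma Hmul_Hinv (p q : ℝ × ℝ × ℝ) :
    Hmul (Hinv p) q =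
      (q.1 - p.1, q.2.1 - p.2.1, q.2.2 - p.2.2 - (p.1 * q.2.1 - p.2.1 * q.1) / 2) := by
  simp only [Hmul, Hinv, Prod.mk.injEq]
  exact ⟨by ring, by ring, by ring⟩

lemma Knorm_le {p : ℝ × ℝ × ℝ} {r : ℝ} (hr : 0 ≤ r) (hx : |p.1| ≤ r) (hy : |p.2.1| ≤ 2 * r)
    (hz : |p.2.2| ≤ r ^ 2) : Knorm p ≤ 3 * r := by
  have hx2 : p.1 ^ 2 ≤ r ^ 2 := sq_le_sq' (abs_le.mp hx).1 (abs_le.mp hx).2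
  have hy2 : p.2.1 ^ 2 ≤ (2 * r) ^ 2 := sq_le_sq' (abs_le.mp hy).1 (abs_le.mp hy).2
  have hz2 : p.2.2 ^ 2 ≤ (r ^ 2) ^ 2 := sq_le_sq' (abs_le.mp hz).1 (abs_le.mp hz).2
  have hsum : (p.1 ^ 2 + p.2.1 ^ 2) ^ 2 + p.2.2 ^ 2 ≤ (3 * r) ^ 4 := by
    have : (p.1 ^ 2 + p.2.1 ^ 2) ^ 2 ≤ (5 * r ^ 2) ^ 2 := by gcongr; linarith
    nlinarith
  calc Knorm p ≤ ((3 * r) ^ 4) ^ ((1 : ℝ) / 4) := by unfold Knorm; gcongr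
    _ = 3 * r := by
        rw [← rpow_natCast, ← rpow_mul (by positivity)]; norm_num

lemma div_le_K4 {p : ℝ × ℝ × ℝ} {r : ℝ} (hr : 0 ≤ r) (hx : |p.1| ≤ r) (hy : |p.2.1| ≤ 2 * r)
    (hz : |p.2.2| ≤ r ^ 2) (hz₀ : p.2.2 ≠ 0) : p.2.2 ^ 2 / (3 * r) ^ 5 ≤ K4 p := by
  have hpos : 0 < Knorm p := by unfold Knorm; positivity
  exact div_le_div_of_nonneg_left (sq_nonneg _) (by positivity)
    (by gcongr; exact Knorm_le hr hx hy hz)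

lemma cos_log_nonneg_and_sin_log_nonneg {n : ℕ} {t : ℝ}
    (ht : t ∈ Icc (exp (2 * π * n)) (exp (2 * π * n + π / 2))) :
    0 ≤ cos (log t) ∧ 0 ≤ sin (log t) := by
  have ht₀ : 0 < t := (exp_pos _).trans_le ht.1
  have h₁ := (le_log_iff_exp_le ht₀).mpr ht.1
  have h₂ := (log_le_iff_le_exp ht₀).mpr ht.2
  rw [← cos_sub_nat_mul_two_pi (log t) n, ← sin_sub_nat_mul_two_pi (log t) n]
  exact ⟨cos_nonneg_of_mem_Icc ⟨by linarith [pi_pos], by linarith⟩,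
    sin_nonneg_of_nonneg_of_le_pi (by linarith) (by linarith [pi_pos])⟩

lemma ofReal_div_two_le_setLIntegral_Ioc {F : ℝ → ℝ≥0∞} {a b c : ℝ} (ha : 0 < a)
    (hab : 2 * a ≤ b) (hc : 0 ≤ c) (hF : ∀ t ∈ Ioc a b, ENNReal.ofReal (c / t) ≤ F t) :
    ENNReal.ofReal (c / 2) ≤ ∫⁻ t in Ioc a b, F t := by
  have hb : 0 < b := by linarith
  calc ENNReal.ofReal (c / 2) ≤ ENNReal.ofReal (c / b * (b - a)) := by
        refine ENNReal.ofReal_le_ofReal ?_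
        rw [div_mul_eq_mul_div, le_div_iff₀ hb]
        nlinarith
    _ = ∫⁻ _ in Ioc a b, ENNReal.ofReal (c / b) := by
        rw [setLIntegral_const, Real.volume_Ioc, ENNReal.ofReal_mul (by positivity)]
    _ ≤ ∫⁻ t in Ioc a b, F t := setLIntegral_mono' measurableSet_Ioc fun t ht =>
        (ENNReal.ofReal_le_ofReal (div_le_div_of_nonneg_left hc (ha.trans ht.1) ht.2)).trans
          (hF t ht)

theorem lintegral_Ioi_eq_top_of_div_le {F : ℝ → ℝ≥0∞} {c T : ℝ} (hc : 0 < c)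
    (hF : ∀ t, T ≤ t → 0 ≤ cos (log t) → 0 ≤ sin (log t) → ENNReal.ofReal (c / t) ≤ F t) :
    ∫⁻ t in Ioi 0, F t = ⊤ := by
  obtain ⟨N, hN⟩ := exists_nat_ge T
  set a : ℕ → ℝ := fun n => exp (2 * π * (N + n : ℕ))
  set S : ℕ → Set ℝ := fun n => Ioc (a n) (exp (2 * π * (N + n : ℕ) + π / 2))
  have ha_mono : Monotone a := fun m n hmn => exp_le_exp.mpr (by gcongr)
  have hT : ∀ n, T ≤ a n := fun n => by
    have : (N : ℝ) ≤ (N + n : ℕ) := by exact_mod_cast N.le_add_right n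
    nlinarith [add_one_le_exp (2 * π * (N + n : ℕ)), pi_gt_three]
  have hpiece : ∀ n, ENNReal.ofReal (c / 2) ≤ ∫⁻ t in S n, F t := fun n => by
    refine ofReal_div_two_le_setLIntegral_Ioc (exp_pos _) ?_ hc.le fun t ht => ?_
    · rw [exp_add]
      nlinarith [add_one_le_exp (π / 2), pi_gt_three, exp_pos (2 * π * (N + n : ℕ))]
    · obtain ⟨hcos, hsin⟩ := cos_log_nonneg_and_sin_log_nonneg (Ioc_subset_Icc_self ht)
      exact hF t ((hT n).trans ht.1.le) hcos hsin
  have hdisj : Pairwise (Function.onFun Disjoint S) := by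
    refine ha_mono.pairwise_disjoint_on_Ioc_succ.mono fun m n h => h.mono ?_ ?_ <;>
      refine Ioc_subset_Ioc le_rfl (exp_le_exp.mpr ?_) <;>
      push_cast [Order.succ_eq_add_one] <;> linarith [pi_pos]
  have hsub : (⋃ n, S n) ⊆ Ioi 0 :=
    iUnion_subset fun n t ht => (exp_pos _).trans ht.1
  refine eq_top_iff.mpr ?_
  calc ⊤ = ∑' _ : ℕ, ENNReal.ofReal (c / 2) :=
        (ENNReal.tsum_const_eq_top_of_ne_zero (by positivity)).symm
    _ ≤ ∑' n, ∫⁻ t in S n, F t := ENNReal.tsum_le_tsum hpiece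
    _ = ∫⁻ t in ⋃ n, S n, F t := (lintegral_iUnion (fun _ => measurableSet_Ioc) hdisj F).symm
    _ ≤ ∫⁻ t in Ioi 0, F t := lintegral_mono_set hsub

noncomputable def sinLogGraph (t : ℝ) : ℝ := if 0 < t then t * sin (log t) else 0

noncomputable def sinLogLift (t : ℝ) : ℝ :=
  if 0 < t then t ^ 2 * (2 * cos (log t) + sin (log t)) / 10 else 0

lemma sinLogGraph_of_pos {t : ℝ} (ht : 0 < t) : sinLogGraph t = t * sin (log t) := if_pos ht

lemma sinLogGraph_of_nonpos {t : ℝ} (ht : t ≤ 0) : sinLogGraph t = 0 := if_neg ht.not_gt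

lemma sinLogLift_of_pos {t : ℝ} (ht : 0 < t) :
    sinLogLift t = t ^ 2 * (2 * cos (log t) + sin (log t)) / 10 := if_pos ht

lemma abs_sinLogGraph_le (t : ℝ) : |sinLogGraph t| ≤ |t| := by
  rcases lt_or_ge 0 t with ht | ht
  · rw [sinLogGraph_of_pos ht, abs_mul]
    exact mul_le_of_le_one_right (abs_nonneg t) (abs_sin_le_one _)
  · simp [sinLogGraph_of_nonpos ht]

lemma hasDerivAt_sinLogGraph {t : ℝ} (ht : 0 < t) :
    HasDerivAt sinLogGraph (sin (log t) + cos (log t)) t := by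
  have h := (hasDerivAt_id t).mul (hasDerivAt_log ht.ne').sin
  rw [id, one_mul, mul_comm (cos _), ← mul_assoc, mul_inv_cancel₀ ht.ne', one_mul] at h
  exact h.congr_of_eventuallyEq <|
    eventually_of_mem (Ioi_mem_nhds ht) fun u hu => sinLogGraph_of_pos hu

lemma hasDerivAt_sinLogLift {t : ℝ} (ht : 0 < t) :
    HasDerivAt sinLogLift (t * cos (log t) / 2) t := by
  have hlog := hasDerivAt_log ht.ne'
  have h := (((hasDerivAt_id' t).fun_pow 2).fun_mul
    ((hlog.cos.const_mul 2).fun_add hlog.sin)).div_const 10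
  refine (h.congr_of_eventuallyEq
    (eventually_of_mem (Ioi_mem_nhds ht) fun u hu => sinLogLift_of_pos hu)).congr_deriv ?_
  field_simp
  ring

lemma continuousOn_sinLogGraph : ContinuousOn sinLogGraph (Ici 0) := by
  intro t ht
  rcases (mem_Ici.mp ht).eq_or_lt with rfl | ht
  · refine ContinuousAt.continuousWithinAt ?_
    have h : Tendsto sinLogGraph (𝓝 0) (𝓝 0) :=
      squeeze_zero_norm abs_sinLogGraph_le tendsto_norm_zero
    rwa [ContinuousAt, sinLogGraph_of_nonpos le_rfl]
  · exact (hasDerivAt_sinLogGraph ht).continuousAt.continuousWithinAt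

lemma lipschitzWith_sinLogGraph : LipschitzWith 2 sinLogGraph := by
  have hIoi : LipschitzOnWith 2 sinLogGraph (Ioi 0) := by
    refine (convex_Ioi 0).lipschitzOnWith_of_nnnorm_hasDerivWithin_le
      (fun x hx => (hasDerivAt_sinLogGraph hx).hasDerivWithinAt) fun x _ => ?_
    rw [← NNReal.coe_le_coe, coe_nnnorm, Real.norm_eq_abs]
    exact (abs_add_le _ _).trans
      (by linarith [abs_sin_le_one (log x), abs_cos_le_one (log x)] : _ ≤ (2 : ℝ))
  have hIci : LipschitzOnWith 2 sinLogGraph (Ici 0) := by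
    rw [← closure_Ioi]
    exact hIoi.closure (closure_Ioi (0 : ℝ) ▸ continuousOn_sinLogGraph)
  have hIic : LipschitzOnWith 2 sinLogGraph (Iic 0) :=
    LipschitzOnWith.of_dist_le_mul fun x hx y hy => by
      simp [sinLogGraph_of_nonpos hx, sinLogGraph_of_nonpos hy]
  exact hIic.lipschitzWith_of_Iic_Ici hIci

lemma abs_sinLogLift_le (t : ℝ) : |sinLogLift t| ≤ 3 * t ^ 2 / 10 := by
  rcases lt_or_ge 0 t with ht | ht
  · rw [sinLogLift_of_pos ht, abs_div, abs_mul, abs_of_nonneg (sq_nonneg t),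
      abs_of_pos (by norm_num : (0 : ℝ) < 10)]
    have : |2 * cos (log t) + sin (log t)| ≤ 3 := (abs_add_le _ _).trans (by
      rw [abs_mul, abs_two]; linarith [abs_cos_le_one (log t), abs_sin_le_one (log t)])
    have := mul_le_mul_of_nonneg_left this (sq_nonneg t)
    linarith
  · simp [sinLogLift, ht.not_gt]; positivity

lemma le_sinLogLift {t : ℝ} (ht : 0 < t) (hc : 0 ≤ cos (log t)) (hs : 0 ≤ sin (log t)) :
    t ^ 2 / 10 ≤ sinLogLift t := by
  have : 1 ≤ 2 * cos (log t) + sin (log t) := by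
    nlinarith [sin_sq_add_cos_sq (log t), sin_le_one (log t), cos_le_one (log t)]
  rw [sinLogLift_of_pos ht]
  gcongr
  nlinarith [sq_nonneg t]

lemma div_le_K4_lift {s t : ℝ} (hs : 0 < s) (hst : 40 * s ≤ t) (hc : 0 ≤ cos (log t))
    (hsn : 0 ≤ sin (log t)) :
    1 / 97200 / t ≤ K4 (Hmul (Hinv (s, sinLogGraph s, sinLogLift s))
      (t, sinLogGraph t, sinLogLift t)) := by
  have ht : 0 < t := by linarith
  have hgs := abs_le.mp ((abs_sinLogGraph_le s).trans_eq (abs_of_pos hs))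
  have hgt := abs_le.mp ((abs_sinLogGraph_le t).trans_eq (abs_of_pos ht))
  have hzs := abs_le.mp (abs_sinLogLift_le s)
  have hzt := abs_le.mp (abs_sinLogLift_le t)
  have hzt' := le_sinLogLift ht hc hsn
  have hsgt : |s * sinLogGraph t - sinLogGraph s * t| ≤ 2 * s * t := by
    rw [abs_le]; constructor <;> nlinarith
  have hst' : s * t ≤ t ^ 2 / 40 := by nlinarith
  have hss : s ^ 2 ≤ t ^ 2 / 1600 := by nlinarith
  rw [Hmul_Hinv]
  dsimp only
  set w := sinLogLift t - sinLogLift s - (s * sinLogGraph t - sinLogGraph s * t) / 2 with hw_def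
  have hw : t ^ 2 / 20 ≤ w ∧ w ≤ t ^ 2 := by
    constructor <;> linarith [abs_le.mp hsgt]
  calc 1 / 97200 / t = (t ^ 2 / 20) ^ 2 / (3 * t) ^ 5 := by field_simp; ring
    _ ≤ w ^ 2 / (3 * t) ^ 5 := by gcongr; exact hw.1
    _ ≤ K4 (t - s, sinLogGraph t - sinLogGraph s, w) := by
        refine div_le_K4 (p := (t - s, sinLogGraph t - sinLogGraph s, w)) ht.le ?_ ?_ ?_ ?_ <;>
          dsimp only
        · rw [abs_of_nonneg] <;> linarith
        · rw [abs_le]; constructor <;> linarith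
        · rw [abs_of_nonneg] <;> linarith
        · nlinarith

/-- There is a `2`-Lipschitz function `g` with `g 0 = 0` such that for its horizontal
lift `γ(t) = (t, g t, z t)` in `ℍ`, one has `∫₀^∞ K₄(γ(s)⁻¹·γ(t)) dt = ∞` for every
`s > 0`: the SIO with kernel `K₄` fails to be `L¹`-bounded on this Lipschitz curve. -/
theorem stmt12 :
    ∃ g : ℝ → ℝ, LipschitzWith 2 g ∧ g 0 = 0 ∧
      ∃ z : ℝ → ℝ, (∀ t : ℝ, 0 < t →
          HasDerivAt z ((1 / 2) * (t * deriv g t - g t * 1)) t) ∧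
        ∀ s : ℝ, 0 < s →
          (∫⁻ t in Set.Ioi (0 : ℝ),
            ENNReal.ofReal
              (K4 (Hmul (Hinv (s, g s, z s)) (t, g t, z t)))) = ⊤ := by
  refine ⟨sinLogGraph, lipschitzWith_sinLogGraph, sinLogGraph_of_nonpos le_rfl, sinLogLift,
    fun t ht => (hasDerivAt_sinLogLift ht).congr_deriv ?_, fun s hs => ?_⟩
  · rw [(hasDerivAt_sinLogGraph ht).deriv, sinLogGraph_of_pos ht]
    ring
  · exact lintegral_Ioi_eq_top_of_div_le (T := 40 * s) (by norm_num) fun t hst hc hsn =>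
      ENNReal.ofReal_le_ofReal (div_le_K4_lift hs hst hc hsn)
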